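/- Assume the frontier Γ of Ω has Lebesgue measure zero. Let u₀ : ℝ³ → ℝ be C¹ on ℝ³ with u₀ = 0 on Γ and u₀ = 0 on ℝ³ \ Ω, and let u₁ : ℝ³ → ℝ be C² on an open neighborhood of the closure of Ω with Δu₁ = 0 on Ω, such that ∇u₀ and ∇u₁ are square-integrable on ℝ³. Then the whole-space energy splits: ∫_{ℝ³} ‖∇u₀(x) + ∇u₁(x)‖² dx = ∫_Ω ‖∇u₀(x)‖² dx + ∫_{ℝ³} ‖∇u₁(x)‖² dx. -/

import Mathlib

open MeasureTheory Real
noncomputable section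

abbrev R3 := EuclideanSpace ℝ (Fin 3)

/-- i-th partial derivative -/
def pd (i : Fin 3) (f : R3 → ℝ) (x : R3) : ℝ := fderiv ℝ f x (EuclideanSpace.single i 1)

/-- divergence: div F = ∑ᵢ ∂ᵢFᵢ -/
def vdiv (F : R3 → R3) (x : R3) : ℝ := ∑ i, pd i (fun y => F y i) x

/-- Laplacian: Δu = div(∇u) -/
def lap (u : R3 → ℝ) (x : R3) : ℝ := vdiv (fun y => gradient u y) x

/-! On Ω, ⟪∇u₀, ∇u₁⟫ = div (u₀ ∇u₁) - u₀ Δu₁. Since u₁ is harmonic and u₀ vanishes on the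
boundary Γ ⊆ ℝ³ \ Ω, Gauss–Green makes the cross term ∫_Ω ⟪∇u₀, ∇u₁⟫ vanish. As u₀ vanishes off Ω,
∇u₀ vanishes off the closure of Ω, hence almost everywhere off Ω because Γ is null; so the cross
term over all of ℝ³ vanishes too, and expanding ‖∇u₀ + ∇u₁‖² gives the split. -/

open InnerProductSpace

section L2

variable {α E : Type*} [MeasurableSpace α] {μ : Measure α}
  [NormedAddCommGroup E] [InnerProductSpace ℝ E]

theorem MeasureTheory.MemLp.integrable_inner {f g : α → E} (hf : MemLp f 2 μ)
    (hg : MemLp g 2 μ) :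
    Integrable (fun x => ⟪f x, g x⟫_ℝ) μ := by
  refine (L2.integrable_inner (𝕜 := ℝ) (hf.toLp f) (hg.toLp g)).congr ?_
  filter_upwards [hf.coeFn_toLp, hg.coeFn_toLp] with x hfx hgx
  rw [hfx, hgx]

theorem integral_norm_add_sq_of_integral_inner_eq_zero {f g : α → E}
    (hf : MemLp f 2 μ) (hg : MemLp g 2 μ) (h : ∫ x, ⟪f x, g x⟫_ℝ ∂μ = 0) :
    ∫ x, ‖f x + g x‖ ^ 2 ∂μ = ∫ x, ‖f x‖ ^ 2 ∂μ + ∫ x, ‖g x‖ ^ 2 ∂μ := by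
  have hf2 := (memLp_two_iff_integrable_sq_norm hf.1).mp hf
  have hg2 := (memLp_two_iff_integrable_sq_norm hg.1).mp hg
  have hfg := (hf.integrable_inner hg).const_mul 2
  simp_rw [norm_add_sq_real]
  have hsum : Integrable (fun x => ‖f x‖ ^ 2 + 2 * ⟪f x, g x⟫_ℝ) μ := hf2.add hfg
  rw [integral_add hsum hg2, integral_add hf2 hfg, integral_const_mul, h]
  ring

end L2

section Gradient

variable {E : Type*} [NormedAddCommGroup E] [InnerProductSpace ℝ E] [CompleteSpace E]

theorem ContDiffOn.gradient {u : E → ℝ} {U : Set E} (hU : IsOpen U) (hu : ContDiffOn ℝ 2 u U) :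
    ContDiffOn ℝ 1 (gradient u) U :=
  (toDual ℝ E).symm.toContinuousLinearEquiv.contDiff.comp_contDiffOn
    (hu.fderiv_of_isOpen hU (by norm_num))

theorem ae_gradient_eq_zero_of_eqOn_compl [MeasurableSpace E] {μ : Measure E} {u : E → ℝ}
    {s : Set E} (hs : μ (frontier s) = 0) (hu : ∀ x ∉ s, u x = 0) :
    ∀ᵐ x ∂μ, x ∉ s → gradient u x = 0 := by
  filter_upwards [measure_eq_zero_iff_ae_notMem.mp hs] with x hx hxs
  have hxc : x ∉ closure s := by
    rw [closure_eq_self_union_frontier]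
    exact fun h => h.elim hxs hx
  have hloc : u =ᶠ[nhds x] fun _ => 0 := by
    filter_upwards [isClosed_closure.isOpen_compl.mem_nhds hxc] with y hy
    exact hu y fun h => hy (subset_closure h)
  rw [hloc.gradient_eq, gradient_fun_const]

end Gradient

theorem pd_eq_gradient_apply (i : Fin 3) (f : R3 → ℝ) (x : R3) : pd i f x = gradient f x i := by
  rw [pd, ← inner_gradient_left, EuclideanSpace.inner_single_right]
  simp

theorem vdiv_smul {u : R3 → ℝ} {G : R3 → R3} {x : R3} (hu : DifferentiableAt ℝ u x)
    (hG : DifferentiableAt ℝ G x) :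
    vdiv (fun y => u y • G y) x = u x * vdiv G x + ⟪gradient u x, G x⟫_ℝ := by
  have hGi (i : Fin 3) : DifferentiableAt ℝ (fun y => G y i) x :=
    (EuclideanSpace.proj i : R3 →L[ℝ] ℝ).differentiableAt.comp x hG
  have hterm (i : Fin 3) : pd i (fun y => (u y • G y) i) x
      = u x * pd i (fun y => G y i) x + G x i * pd i u x := by
    simp only [pd, PiLp.smul_apply, smul_eq_mul, fderiv_fun_mul hu (hGi i)]
    simp
  simp only [vdiv, hterm, Finset.sum_add_distrib, ← Finset.mul_sum, pd_eq_gradient_apply,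
    PiLp.inner_apply, RCLike.inner_apply, conj_trivial]

theorem setIntegral_inner_gradient_eq_zero_of_lap_eq_zero {Ω : Set R3} (hΩ : IsOpen Ω)
    {σ : Measure R3} {n : R3 → R3}
    (hGG : ∀ (F : R3 → R3) (U : Set R3), IsOpen U → closure Ω ⊆ U → ContDiffOn ℝ 1 F U →
      ∫ x in Ω, vdiv F x = ∫ y in frontier Ω, ⟪F y, n y⟫_ℝ ∂σ)
    {u₀ : R3 → ℝ} (hu₀ : ContDiff ℝ 1 u₀) (hu₀ext : ∀ x ∉ Ω, u₀ x = 0)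
    {u₁ : R3 → ℝ} {U₁ : Set R3} (hU₁open : IsOpen U₁) (hU₁ : closure Ω ⊆ U₁)
    (hu₁ : ContDiffOn ℝ 2 u₁ U₁) (hu₁harm : ∀ x ∈ Ω, lap u₁ x = 0) :
    ∫ x in Ω, ⟪gradient u₀ x, gradient u₁ x⟫_ℝ = 0 := by
  have hgrad₁ := hu₁.gradient hU₁open
  calc ∫ x in Ω, ⟪gradient u₀ x, gradient u₁ x⟫_ℝ
      = ∫ x in Ω, vdiv (fun y => u₀ y • gradient u₁ y) x := by
        refine setIntegral_congr_fun hΩ.measurableSet fun x hx => ?_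
        have hx₁ : U₁ ∈ nhds x := hU₁open.mem_nhds (hU₁ (subset_closure hx))
        rw [vdiv_smul (hu₀.differentiable one_ne_zero x)
          ((hgrad₁.differentiableOn one_ne_zero).differentiableAt hx₁)]
        rw [show vdiv (gradient u₁) x = lap u₁ x from rfl, hu₁harm x hx]
        ring
    _ = ∫ y in frontier Ω, ⟪u₀ y • gradient u₁ y, n y⟫_ℝ ∂σ :=
        hGG _ U₁ hU₁open hU₁ (hu₀.contDiffOn.smul hgrad₁)
    _ = 0 := by
        refine setIntegral_eq_zero_of_forall_eq_zero fun y hy => ?_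
        rw [hu₀ext y (hΩ.frontier_eq ▸ hy : y ∈ closure Ω \ Ω).2, zero_smul, inner_zero_left]

theorem whole_space_energy_split_general
    (Ω : Set R3) (hΩopen : IsOpen Ω)
    (σ : Measure R3) (hσ : σ = (μH[2] : Measure R3).restrict (frontier Ω))
    (n : R3 → R3)
    (hGG : ∀ (F : R3 → R3) (U : Set R3), IsOpen U → closure Ω ⊆ U → ContDiffOn ℝ 1 F U →
      ∫ x in Ω, vdiv F x = ∫ y, (inner ℝ (F y) (n y) : ℝ) ∂σ)
    (hΓnull : volume (frontier Ω) = 0)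
    (u₀ : R3 → ℝ) (hu₀ : ContDiff ℝ 1 u₀)
    (hu₀ext : ∀ x ∉ Ω, u₀ x = 0)
    (u₁ : R3 → ℝ) (U₁ : Set R3) (hU₁open : IsOpen U₁) (hU₁ : closure Ω ⊆ U₁)
    (hu₁ : ContDiffOn ℝ 2 u₁ U₁) (hu₁harm : ∀ x ∈ Ω, lap u₁ x = 0)
    (hgu₀L2 : MemLp (fun x => gradient u₀ x) 2 (volume : Measure R3))
    (hgu₁L2 : MemLp (fun x => gradient u₁ x) 2 (volume : Measure R3)) :
    ∫ x, ‖gradient u₀ x + gradient u₁ x‖ ^ 2 =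
      (∫ x in Ω, ‖gradient u₀ x‖ ^ 2) + ∫ x, ‖gradient u₁ x‖ ^ 2 := by
  subst hσ
  have hgrad₀ := ae_gradient_eq_zero_of_eqOn_compl hΓnull hu₀ext
  have hcross : ∫ x, ⟪gradient u₀ x, gradient u₁ x⟫_ℝ = 0 := by
    rw [← setIntegral_eq_integral_of_ae_compl_eq_zero,
      setIntegral_inner_gradient_eq_zero_of_lap_eq_zero hΩopen hGG hu₀ hu₀ext hU₁open hU₁ hu₁
        hu₁harm]
    filter_upwards [hgrad₀] with x hx hxΩ
    rw [hx hxΩ, inner_zero_left]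
  rw [integral_norm_add_sq_of_integral_inner_eq_zero hgu₀L2 hgu₁L2 hcross,
    setIntegral_eq_integral_of_ae_compl_eq_zero]
  filter_upwards [hgrad₀] with x hx hxΩ
  rw [hx hxΩ, norm_zero, sq, zero_mul]

/-- Whole-space energy splitting: with u₀ vanishing outside Ω and u₁ harmonic
on Ω, ∫_{ℝ³} ‖∇u₀ + ∇u₁‖² dx = ∫_Ω ‖∇u₀‖² dx + ∫_{ℝ³} ‖∇u₁‖² dx. -/
theorem whole_space_energy_split
    (Ω : Set R3) (hΩopen : IsOpen Ω) (hΩbd : Bornology.IsBounded Ω)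
    (σ : Measure R3) (hσ : σ = (μH[2] : Measure R3).restrict (frontier Ω))
    (hσfin : σ Set.univ < ⊤)
    (n : R3 → R3) (hn : ∀ y ∈ frontier Ω, ‖n y‖ = 1)
    (hGG : ∀ (F : R3 → R3) (U : Set R3), IsOpen U → closure Ω ⊆ U → ContDiffOn ℝ 1 F U →
      ∫ x in Ω, vdiv F x = ∫ y, (inner ℝ (F y) (n y) : ℝ) ∂σ)
    (hΓnull : volume (frontier Ω) = 0)
    (u₀ : R3 → ℝ) (hu₀ : ContDiff ℝ 1 u₀)
    (hu₀Γ : ∀ y ∈ frontier Ω, u₀ y = 0) (hu₀ext : ∀ x ∉ Ω, u₀ x = 0)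
    (u₁ : R3 → ℝ) (U₁ : Set R3) (hU₁open : IsOpen U₁) (hU₁ : closure Ω ⊆ U₁)
    (hu₁ : ContDiffOn ℝ 2 u₁ U₁) (hu₁harm : ∀ x ∈ Ω, lap u₁ x = 0)
    (hgu₀L2 : MemLp (fun x => gradient u₀ x) 2 (volume : Measure R3))
    (hgu₁L2 : MemLp (fun x => gradient u₁ x) 2 (volume : Measure R3)) :
    ∫ x, ‖gradient u₀ x + gradient u₁ x‖ ^ 2 =
      (∫ x in Ω, ‖gradient u₀ x‖ ^ 2) + ∫ x, ‖gradient u₁ x‖ ^ 2 :=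
  whole_space_energy_split_general Ω hΩopen σ hσ n hGG hΓnull u₀ hu₀ hu₀ext u₁ U₁ hU₁open hU₁ hu₁
    hu₁harm hgu₀L2 hgu₁L2
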